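/- Let k be a field of characteristic 0 equipped with a multiplicative nonarchimedean norm, and let δ > 0 be a real number. Let a : ℤ → k be overconvergent on the punctured disk of radius δ. Then there exists b : ℤ → k, overconvergent on the punctured disk of radius δ, whose derivative equals a (i.e. (n+1)b_{n+1} = aₙ for all n ∈ ℤ) if and only if a_{-1} = 0. (Computation of the de Rham cohomology of the overconvergent punctured disk of radius δ, one side of the comparison in the proof of the homotopy invariance Proposition.) -/

import Mathlib

/-!
STATEMENT 6: Over a nonarchimedean normed field `k` of characteristic zero, a
Laurent series overconvergent on the punctured disk of radius `δ` (a two-sided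
coefficient sequence `a : ℤ → k` such that for some `δ' > δ` and every `0 < ρ < δ'`
one has `‖aₙ‖ρⁿ → 0` as `n → +∞` and as `n → -∞`) is the derivative of such an
overconvergent Laurent series if and only if its residue `a₋₁` vanishes.  The
derivative of `b` is the sequence `n ↦ (n+1) b_{n+1}`.
-/

/-- `a : ℤ → k` (encoding the Laurent series `Σ aₙ Tⁿ`) is overconvergent on the
punctured disk of radius `δ`. -/
def IsOvercgtOnPuncturedDisk {k : Type*} [NormedField k] (δ : ℝ) (a : ℤ → k) : Prop :=
  ∃ δ' : ℝ, δ < δ' ∧ ∀ ρ : ℝ, 0 < ρ → ρ < δ' →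
    Filter.Tendsto (fun n : ℤ => ‖a n‖ * ρ ^ n) Filter.atTop (nhds 0) ∧
    Filter.Tendsto (fun n : ℤ => ‖a n‖ * ρ ^ n) Filter.atBot (nhds 0)

open Filter

section Aux

variable {k : Type*} [NormedField k]

lemma aux_nat_norm_le_one (hna : ∀ x y : k, ‖x + y‖ ≤ max ‖x‖ ‖y‖) :
    ∀ n : ℕ, ‖(n : k)‖ ≤ 1 := by
  intro n
  induction n with
  | zero => simp
  | succ m ih =>
    push_cast
    calc ‖(m : k) + 1‖ ≤ max ‖(m : k)‖ ‖(1 : k)‖ := hna _ _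
    _ ≤ 1 := by simp [ih]

lemma aux_int_norm_le_one (hna : ∀ x y : k, ‖x + y‖ ≤ max ‖x‖ ‖y‖) (n : ℤ) :
    ‖(n : k)‖ ≤ 1 := by
  rcases Int.natAbs_eq n with h | h <;> rw [h]
  · rw [Int.cast_natCast]; exact aux_nat_norm_le_one hna _
  · rw [Int.cast_neg, norm_neg, Int.cast_natCast]; exact aux_nat_norm_le_one hna _

lemma aux_coprime_norm_eq_one (hna : ∀ x y : k, ‖x + y‖ ≤ max ‖x‖ ‖y‖)
    {m p : ℕ} (h : Nat.Coprime m p) (hp : ‖(p : k)‖ < 1) : ‖(m : k)‖ = 1 := by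
  obtain ⟨u, v, huv⟩ := h.isCoprime
  have h1 : (1 : k) = (u : k) * m + (v : k) * p := by
    have := congrArg (fun z : ℤ => (z : k)) huv
    push_cast at this
    simpa using this.symm
  have h2 : (1 : ℝ) ≤ max (‖(u : k)‖ * ‖(m : k)‖) (‖(v : k)‖ * ‖(p : k)‖) := by
    calc (1 : ℝ) = ‖(1 : k)‖ := norm_one.symm
    _ = ‖(u : k) * m + (v : k) * p‖ := by rw [← h1]
    _ ≤ max ‖(u : k) * (m : k)‖ ‖(v : k) * (p : k)‖ := hna _ _
    _ = max (‖(u : k)‖ * ‖(m : k)‖) (‖(v : k)‖ * ‖(p : k)‖) := by rw [norm_mul, norm_mul]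
  have hu := aux_int_norm_le_one hna u
  have hv := aux_int_norm_le_one hna v
  have hm := aux_nat_norm_le_one hna m
  rcases le_max_iff.mp h2 with h3 | h3
  · have : (1:ℝ) ≤ ‖(m : k)‖ := le_trans h3 (by
      nlinarith [norm_nonneg ((m : k)), norm_nonneg ((u : k))])
    linarith
  · exfalso
    nlinarith [norm_nonneg ((v : k)), norm_nonneg ((p : k))]

variable [CharZero k]

lemma aux_exists_nat_norm_bound (hna : ∀ x y : k, ‖x + y‖ ≤ max ‖x‖ ‖y‖) :
    ∃ s : ℕ, ∀ n : ℕ, 0 < n → 1 ≤ (n : ℝ) ^ s * ‖(n : k)‖ := by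
  by_cases H : ∃ p : ℕ, p.Prime ∧ ‖(p : k)‖ < 1
  · obtain ⟨p, hp, hplt⟩ := H
    have hpk : ((p : k)) ≠ 0 := Nat.cast_ne_zero.mpr hp.pos.ne'
    have htpos : (0 : ℝ) < ‖(p : k)‖ := norm_pos_iff.mpr hpk
    have hpR : (1 : ℝ) < (p : ℝ) := by exact_mod_cast hp.one_lt
    obtain ⟨s, hs⟩ := exists_pow_lt_of_lt_one htpos (inv_lt_one_of_one_lt₀ hpR)
    have hkey : (1 : ℝ) ≤ (p : ℝ) ^ s * ‖(p : k)‖ := by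
      have hps : (0:ℝ) < (p:ℝ) ^ s := by positivity
      have : ((p:ℝ)⁻¹) ^ s = ((p:ℝ) ^ s)⁻¹ := by rw [inv_pow]
      rw [this] at hs
      have h2 := mul_lt_mul_of_pos_left hs hps
      rw [mul_inv_cancel₀ hps.ne'] at h2
      linarith
    refine ⟨s, fun n hn => ?_⟩
    set v := n.factorization p with hv
    have hfac : p ^ v * (n / p ^ v) = n := Nat.ordProj_mul_ordCompl_eq_self n p
    have hcop : Nat.Coprime (n / p ^ v) p :=
      (Nat.coprime_ordCompl hp hn.ne').symm
    have hm1 : ‖((n / p ^ v : ℕ) : k)‖ = 1 := aux_coprime_norm_eq_one hna hcop hplt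
    have hnorm : ‖(n : k)‖ = ‖(p : k)‖ ^ v := by
      conv_lhs => rw [← hfac]
      push_cast
      rw [norm_mul, norm_pow, hm1, mul_one]
    have hle : ((p : ℝ)) ^ v ≤ (n : ℝ) := by
      exact_mod_cast Nat.ordProj_le p hn.ne'
    calc (1 : ℝ) ≤ ((p : ℝ) ^ s * ‖(p : k)‖) ^ v := one_le_pow₀ hkey
    _ = ((p : ℝ) ^ v) ^ s * ‖(p : k)‖ ^ v := by
        rw [mul_pow, ← pow_mul, ← pow_mul, Nat.mul_comm]
    _ ≤ (n : ℝ) ^ s * ‖(p : k)‖ ^ v := by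
        apply mul_le_mul_of_nonneg_right _ (by positivity)
        exact pow_le_pow_left₀ (by positivity) hle s
    _ = (n : ℝ) ^ s * ‖(n : k)‖ := by rw [hnorm]
  · push_neg at H
    refine ⟨0, fun n => ?_⟩
    induction n using Nat.strong_induction_on with
    | _ n ih =>
      intro hn
      rcases eq_or_lt_of_le (show 1 ≤ n from hn) with h1 | h1
      · simp [← h1]
      · have hne1 : n ≠ 1 := by omega
        have hpf := Nat.minFac_prime hne1
        have hdvd := Nat.minFac_dvd n
        have heq : n.minFac * (n / n.minFac) = n := Nat.mul_div_cancel' hdvd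
        have hlt : n / n.minFac < n := Nat.div_lt_self hn hpf.one_lt
        have hpos : 0 < n / n.minFac := Nat.div_pos (Nat.minFac_le hn) hpf.pos
        have h2 := ih _ hlt hpos
        have hmf : ‖((n.minFac : ℕ) : k)‖ = 1 :=
          le_antisymm (aux_nat_norm_le_one hna _) (H _ hpf)
        have : ‖(n : k)‖ = 1 := by
          conv_lhs => rw [← heq]
          push_cast
          rw [norm_mul, hmf, one_mul]
          simp only [pow_zero, one_mul] at h2
          linarith [aux_nat_norm_le_one hna (n / n.minFac)]
        simp [this]

lemma aux_exists_int_norm_bound (hna : ∀ x y : k, ‖x + y‖ ≤ max ‖x‖ ‖y‖) :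
    ∃ s : ℕ, ∀ n : ℤ, n ≠ 0 → ‖(n : k)‖⁻¹ ≤ (n.natAbs : ℝ) ^ s := by
  obtain ⟨s, hs⟩ := aux_exists_nat_norm_bound hna
  refine ⟨s, fun n hn => ?_⟩
  have h1 : ‖(n : k)‖ = ‖((n.natAbs : ℕ) : k)‖ := by
    rcases Int.natAbs_eq n with h | h
    · conv_lhs => rw [h]
      rw [Int.cast_natCast]
    · conv_lhs => rw [h]
      rw [Int.cast_neg, norm_neg, Int.cast_natCast]
  have h2 := hs n.natAbs (Int.natAbs_pos.mpr hn)
  have hpos : 0 < ‖(n : k)‖ := norm_pos_iff.mpr (Int.cast_ne_zero.mpr hn)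
  rw [h1] at hpos ⊢
  rw [← one_div, div_le_iff₀ hpos]
  exact h2

end Aux

lemma aux_poly_geom_int_atTop (s : ℕ) {r : ℝ} (h0 : 0 ≤ r) (h1 : r < 1) :
    Tendsto (fun n : ℤ => (n.natAbs : ℝ) ^ s * r ^ n) atTop (nhds 0) := by
  rw [← Nat.map_cast_int_atTop, tendsto_map'_iff]
  have : ((fun n : ℤ => (n.natAbs : ℝ) ^ s * r ^ n) ∘ ((↑) : ℕ → ℤ)) =
      fun m : ℕ => (m : ℝ) ^ s * r ^ m := by
    funext m
    simp [Function.comp, zpow_natCast]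
  rw [this]
  exact tendsto_pow_const_mul_const_pow_of_lt_one s h0 h1

lemma aux_poly_geom_int_atBot (s : ℕ) {r : ℝ} (h0 : 0 < r) (h1 : 1 < r) :
    Tendsto (fun n : ℤ => (n.natAbs : ℝ) ^ s * r ^ n) atBot (nhds 0) := by
  rw [← Filter.map_neg_atTop (G := ℤ), tendsto_map'_iff]
  have : ((fun n : ℤ => (n.natAbs : ℝ) ^ s * r ^ n) ∘ (Neg.neg : ℤ → ℤ)) =
      fun n : ℤ => (n.natAbs : ℝ) ^ s * (r⁻¹) ^ n := by
    funext n
    simp [Function.comp, Int.natAbs_neg, zpow_neg, inv_zpow]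
  rw [this]
  exact aux_poly_geom_int_atTop s (by positivity) (inv_lt_one_of_one_lt₀ h1)

theorem punctured_disk_laurent_is_derivative_iff_residue_zero
    (k : Type*) [NormedField k] [CharZero k]
    (hna : ∀ x y : k, ‖x + y‖ ≤ max ‖x‖ ‖y‖)
    (δ : ℝ) (hδ : 0 < δ)
    (a : ℤ → k) (ha : IsOvercgtOnPuncturedDisk δ a) :
    (∃ b : ℤ → k, IsOvercgtOnPuncturedDisk δ b ∧
        ∀ n : ℤ, ((n + 1 : ℤ) : k) * b (n + 1) = a n) ↔ a (-1) = 0 := by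
  constructor
  · rintro ⟨b, -, hb⟩
    have h := hb (-1)
    norm_num at h
    exact h.symm
  · intro hres
    obtain ⟨δ', hδδ', hconv⟩ := ha
    obtain ⟨s, hs⟩ := aux_exists_int_norm_bound hna
    set b : ℤ → k := fun n => if n = 0 then 0 else a (n - 1) / (n : k) with hbdef
    refine ⟨b, ⟨δ', hδδ', ?_⟩, ?_⟩
    · intro ρ hρ0 hρδ'
      have hbnorm : ∀ n : ℤ, n ≠ 0 → ‖b n‖ ≤ ‖a (n - 1)‖ * (n.natAbs : ℝ) ^ s := by
        intro n hn
        rw [hbdef]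
        simp only [if_neg hn]
        rw [norm_div, div_eq_mul_inv]
        exact mul_le_mul_of_nonneg_left (hs n hn) (norm_nonneg _)
      constructor
      · -- behaviour at +∞, compare with radius ρ' ∈ (ρ, δ')
        set ρ' := (ρ + δ') / 2 with hρ'def
        have hρ'0 : 0 < ρ' := by rw [hρ'def]; linarith
        have hρρ' : ρ < ρ' := by rw [hρ'def]; linarith
        have hρ'δ' : ρ' < δ' := by rw [hρ'def]; linarith
        have hF : Tendsto (fun n : ℤ => ‖a (n - 1)‖ * ρ' ^ (n - 1)) atTop (nhds 0) := by
          have h := (hconv ρ' hρ'0 hρ'δ').1.comp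
            (tendsto_atTop_add_const_right atTop (-1) (tendsto_id (α := ℤ)))
          simpa [Function.comp_def, sub_eq_add_neg] using h
        have hG : Tendsto
            (fun n : ℤ => (n.natAbs : ℝ) ^ s * (ρ / ρ') ^ n * (ρ' / ρ * ρ)) atTop (nhds 0) := by
          have h := (aux_poly_geom_int_atTop s (by positivity)
            ((div_lt_one hρ'0).mpr hρρ')).mul_const (ρ' / ρ * ρ)
          simpa using h
        have hFG := hF.mul hG
        rw [zero_mul] at hFG
        apply squeeze_zero' (Filter.Eventually.of_forall
          (fun n => mul_nonneg (norm_nonneg _) (zpow_pos hρ0 n).le)) _ hFG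
        filter_upwards [eventually_ge_atTop (1 : ℤ)] with n hn1
        have hn : n ≠ 0 := by omega
        have e1 : (‖a (n - 1)‖ * ρ' ^ (n - 1)) *
            ((n.natAbs : ℝ) ^ s * (ρ / ρ') ^ n * (ρ' / ρ * ρ))
            = (‖a (n - 1)‖ * (n.natAbs : ℝ) ^ s) * ρ ^ n := by
          have h2 : ρ ^ n = ρ ^ (n - 1) * ρ := by
            rw [← zpow_add_one₀ hρ0.ne', sub_add_cancel]
          have h3 : ρ' ^ (n - 1) * (ρ / ρ') ^ (n - 1) = ρ ^ (n - 1) := by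
            rw [← mul_zpow]
            congr 1
            field_simp
          have h4 : (ρ / ρ') ^ n = (ρ / ρ') ^ (n - 1) * (ρ / ρ') := by
            rw [← zpow_add_one₀ (div_pos hρ0 hρ'0).ne', sub_add_cancel]
          rw [h4, h2, ← h3]
          field_simp
        rw [e1]
        exact mul_le_mul_of_nonneg_right (hbnorm n hn) (zpow_pos hρ0 n).le
      · -- behaviour at -∞, compare with radius ρ'' = ρ/2 ∈ (0, ρ)
        set ρ'' := ρ / 2 with hρ''def
        have hρ''0 : 0 < ρ'' := by rw [hρ''def]; linarith
        have hρ''ρ : ρ'' < ρ := by rw [hρ''def]; linarith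
        have hρ''δ' : ρ'' < δ' := by linarith
        have hF : Tendsto (fun n : ℤ => ‖a (n - 1)‖ * ρ'' ^ (n - 1)) atBot (nhds 0) := by
          have h := (hconv ρ'' hρ''0 hρ''δ').2.comp
            (tendsto_atBot_add_const_right atBot (-1) (tendsto_id (α := ℤ)))
          simpa [Function.comp_def, sub_eq_add_neg] using h
        have hG : Tendsto
            (fun n : ℤ => (n.natAbs : ℝ) ^ s * (ρ / ρ'') ^ n * (ρ'' / ρ * ρ)) atBot (nhds 0) := by
          have h := (aux_poly_geom_int_atBot s (by positivity)
            ((one_lt_div hρ''0).mpr hρ''ρ)).mul_const (ρ'' / ρ * ρ)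
          simpa using h
        have hFG := hF.mul hG
        rw [zero_mul] at hFG
        apply squeeze_zero' (Filter.Eventually.of_forall
          (fun n => mul_nonneg (norm_nonneg _) (zpow_pos hρ0 n).le)) _ hFG
        filter_upwards [eventually_le_atBot (-1 : ℤ)] with n hn1
        have hn : n ≠ 0 := by omega
        have e1 : (‖a (n - 1)‖ * ρ'' ^ (n - 1)) *
            ((n.natAbs : ℝ) ^ s * (ρ / ρ'') ^ n * (ρ'' / ρ * ρ))
            = (‖a (n - 1)‖ * (n.natAbs : ℝ) ^ s) * ρ ^ n := by
          have h2 : ρ ^ n = ρ ^ (n - 1) * ρ := by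
            rw [← zpow_add_one₀ hρ0.ne', sub_add_cancel]
          have h3 : ρ'' ^ (n - 1) * (ρ / ρ'') ^ (n - 1) = ρ ^ (n - 1) := by
            rw [← mul_zpow]
            congr 1
            field_simp
          have h4 : (ρ / ρ'') ^ n = (ρ / ρ'') ^ (n - 1) * (ρ / ρ'') := by
            rw [← zpow_add_one₀ (div_pos hρ0 hρ''0).ne', sub_add_cancel]
          rw [h4, h2, ← h3]
          field_simp
        rw [e1]
        exact mul_le_mul_of_nonneg_right (hbnorm n hn) (zpow_pos hρ0 n).le
    · intro n
      by_cases hn : n = -1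
      · subst hn
        norm_num [hres]
      · have h1 : n + 1 ≠ 0 := by omega
        have h2 : ((n + 1 : ℤ) : k) ≠ 0 := Int.cast_ne_zero.mpr h1
        rw [hbdef]
        simp only [if_neg h1, add_sub_cancel_right]
        rw [mul_comm, div_mul_cancel₀ _ h2]
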